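/- arXiv:2307.14040 — 7 statements merged into one kernel-verified Lean document; each statement's English description precedes it below -/
import Mathlib

section
/- Let S ∈ 𝕊_n^π and Z ∈ ℝ^{n×n}. If α, β ∈ ℝ^n solve 𝒜·(α;β) = (Z𝟏; Z^Tπ) with 𝒜 as above, then the matrix Π_S(Z) = Z − (α𝟏^T + πβ^T) ⊙ S satisfies Π_S(Z)·𝟏 = 0 and π^T·Π_S(Z) = 0, i.e. Π_S(Z) lies in the tangent space of 𝕊_n^π at S. -/
open Matrix

/-- If `α, β` solve `𝒜(α;β) = (Z𝟏; Zᵀπ)`, then `Π_S(Z) = Z − (α𝟏ᵀ + πβᵀ) ⊙ S`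
lies in the tangent space `{ξ | ξ𝟏 = 0, πᵀξ = 0}` of `𝕊ₙ^π` at `S`. -/
theorem projection_lies_in_tangent_space (n : ℕ) (π : Fin n → ℝ)
    (hπ : ∀ i, 0 < π i) (hπ1 : π ⬝ᵥ (1 : Fin n → ℝ) = 1)
    (S : Matrix (Fin n) (Fin n) ℝ)
    (hS1 : S *ᵥ (1 : Fin n → ℝ) = 1) (hπS : π ᵥ* S = π) (hSpos : ∀ i j, 0 < S i j)
    (Z : Matrix (Fin n) (Fin n) ℝ) (α β : Fin n → ℝ)
    (hsol : (Matrix.fromBlocks 1 (Matrix.diagonal π * S) (Sᵀ * Matrix.diagonal π)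
        (Matrix.diagonal (Sᵀ *ᵥ (π * π)))) *ᵥ (Sum.elim α β)
        = Sum.elim (Z *ᵥ (1 : Fin n → ℝ)) (Zᵀ *ᵥ π))
    (P : Matrix (Fin n) (Fin n) ℝ)
    (hP : P = Z - Matrix.of fun i j => (α i + π i * β j) * S i j) :
    P *ᵥ (1 : Fin n → ℝ) = 0 ∧ π ᵥ* P = 0 := by
  rw [Matrix.fromBlocks_mulVec] at hsol
  constructor
  · funext i
    have h1 := congrFun hsol (Sum.inl i)
    have hrow := congrFun hS1 i
    simp only [Sum.elim_inl, Matrix.one_mulVec, Pi.add_apply, Function.comp,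
      Matrix.mulVec, dotProduct, Matrix.mul_apply, Matrix.diagonal_apply,
      ite_mul, zero_mul, Finset.sum_ite_eq, Finset.mem_univ, if_true, Sum.elim_inl, Sum.elim_inr,
      Pi.one_apply, mul_one] at h1 hrow
    simp only [hP, Matrix.mulVec, dotProduct, Matrix.sub_apply,
      Matrix.of_apply, Pi.zero_apply, Pi.one_apply, mul_one]
    rw [Finset.sum_sub_distrib]
    have key : ∑ j, (α i + π i * β j) * S i j
        = α i * (∑ j, S i j) + ∑ j, π i * S i j * β j := by
      rw [Finset.mul_sum, ← Finset.sum_add_distrib]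
      exact Finset.sum_congr rfl fun j _ => by ring
    rw [key, hrow]
    linarith [h1]
  · funext j
    have h2 := congrFun hsol (Sum.inr j)
    have hcol := congrFun hπS j
    simp only [Sum.elim_inr, Pi.add_apply, Function.comp, Matrix.mulVec,
      Matrix.vecMul, dotProduct, Matrix.mul_apply, Matrix.diagonal_apply,
      Matrix.transpose_apply, ite_mul, mul_ite, zero_mul, mul_zero,
      Finset.sum_ite_eq, Finset.sum_ite_eq', Finset.mem_univ, if_true, Sum.elim_inl, Sum.elim_inr,
      Pi.mul_apply] at h2 hcol
    simp only [hP, Matrix.vecMul, dotProduct, Matrix.sub_apply,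
      Matrix.of_apply, Pi.zero_apply, mul_sub]
    rw [Finset.sum_sub_distrib]
    have key : ∑ i, π i * ((α i + π i * β j) * S i j)
        = (∑ i, S i j * π i * α i) + (∑ i, S i j * (π i * π i)) * β j := by
      rw [Finset.sum_mul, ← Finset.sum_add_distrib]
      exact Finset.sum_congr rfl fun i _ => by ring
    have hz : ∑ x, π x * Z x j = ∑ x, Z x j * π x :=
      Finset.sum_congr rfl fun x _ => mul_comm _ _
    rw [key, hz]
    linarith [h2]
end

section
/- Let S ∈ 𝕊_n^π and D_π = diag(π). Then the matrix 𝒜 = [[I, D_π S],[S^T D_π, diag(S^T D_π π)]] is similar, via the diagonal matrix D = diag(D_π, −I), to the matrix à = [[I, −S],[−S^T D_π², diag(S^T D_π π)]], which is a Z-matrix (nonpositive off-diagonal entries) satisfying Ã𝟏 = 0; hence à is a singular M-matrix and all eigenvalues of 𝒜 are nonnegative reals. -/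
open Matrix

set_option maxHeartbeats 1000000 in
theorem quadform_key (n : ℕ) (π : Fin n → ℝ) (S : Matrix (Fin n) (Fin n) ℝ)
    (hS1 : S *ᵥ (1 : Fin n → ℝ) = 1)
    (x : Fin n ⊕ Fin n → ℝ) :
    x ⬝ᵥ (Matrix.fromBlocks 1 (Matrix.diagonal π * S) (Sᵀ * Matrix.diagonal π)
        (Matrix.diagonal (Sᵀ *ᵥ (π * π)))) *ᵥ x
      = ∑ i, ∑ j, S i j * (x (Sum.inl i) + π i * x (Sum.inr j))^2 := by
  have hrow : ∀ i, ∑ j, S i j = 1 := by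
    intro i
    have := congrFun hS1 i
    simpa [mulVec, dotProduct] using this
  simp only [dotProduct, mulVec, Fintype.sum_sum_type, fromBlocks_apply₁₁,
    fromBlocks_apply₁₂, fromBlocks_apply₂₁, fromBlocks_apply₂₂, mul_apply,
    diagonal_apply, transpose_apply, one_apply, mulVec, Pi.mul_apply,
    ite_mul, zero_mul, Finset.sum_ite_eq, Finset.sum_ite_eq', Finset.mem_univ, if_true]
  have expand : ∀ i j : Fin n, S i j * (x (Sum.inl i) + π i * x (Sum.inr j))^2
      = S i j * x (Sum.inl i)^2 + 2 * (x (Sum.inl i) * (π i * S i j * x (Sum.inr j)))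
        + S i j * (π i * π i) * x (Sum.inr j)^2 := by intro i j; ring
  simp only [expand, Finset.sum_add_distrib]
  simp only [mul_ite, mul_zero, Finset.sum_ite_eq, Finset.sum_ite_eq', Finset.mem_univ,
    if_true, one_mul, mul_add, Finset.mul_sum, add_mul, Finset.sum_add_distrib]
  have hR1 : ∑ i, ∑ j, S i j * x (Sum.inl i)^2 = ∑ i, x (Sum.inl i) * x (Sum.inl i) := by
    refine Finset.sum_congr rfl fun i _ => ?_
    rw [← Finset.sum_mul, hrow]; ring
  have hR2 : ∑ i, ∑ j, 2 * (x (Sum.inl i) * (π i * S i j * x (Sum.inr j)))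
      = ∑ i, ∑ j, x (Sum.inl i) * (π i * S i j * x (Sum.inr j))
        + ∑ j, ∑ i, x (Sum.inr j) * (S i j * π i * x (Sum.inl i)) := by
    rw [Finset.sum_comm (f := fun j i => x (Sum.inr j) * (S i j * π i * x (Sum.inl i)))]
    rw [← Finset.sum_add_distrib]
    refine Finset.sum_congr rfl fun i _ => ?_
    rw [← Finset.sum_add_distrib]
    refine Finset.sum_congr rfl fun j _ => ?_
    ring
  have hR3 : ∑ i, ∑ j, S i j * (π i * π i) * x (Sum.inr j)^2
      = ∑ j, x (Sum.inr j) * ((∑ k, S k j * (π k * π k)) * x (Sum.inr j)) := by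
    rw [Finset.sum_comm]
    refine Finset.sum_congr rfl fun j _ => ?_
    rw [← Finset.sum_mul]
    ring
  rw [hR1, hR2, hR3]
  ring


set_option maxHeartbeats 1000000 in
/-- `𝒜` is similar via `D = diag(D_π, −I)` to the Z-matrix `Ã` with `Ã𝟏 = 0`
(a singular M-matrix), hence all eigenvalues of `𝒜` are nonnegative. -/
theorem block_matrix_similar_singular_M_matrix (n : ℕ) (π : Fin n → ℝ)
    (hπ : ∀ i, 0 < π i) (hπ1 : π ⬝ᵥ (1 : Fin n → ℝ) = 1)
    (S : Matrix (Fin n) (Fin n) ℝ)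
    (hS1 : S *ᵥ (1 : Fin n → ℝ) = 1) (hπS : π ᵥ* S = π) (hSpos : ∀ i j, 0 < S i j)
    (𝒜 Atil D : Matrix (Fin n ⊕ Fin n) (Fin n ⊕ Fin n) ℝ)
    (h𝒜 : 𝒜 = Matrix.fromBlocks 1 (Matrix.diagonal π * S) (Sᵀ * Matrix.diagonal π)
        (Matrix.diagonal (Sᵀ *ᵥ (π * π))))
    (hAtil : Atil = Matrix.fromBlocks 1 (-S) (-(Sᵀ * Matrix.diagonal (π * π)))
        (Matrix.diagonal (Sᵀ *ᵥ (π * π))))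
    (hD : D = Matrix.fromBlocks (Matrix.diagonal π) 0 0 (-1)) :
    𝒜 * D = D * Atil ∧
    (∀ i j, i ≠ j → Atil i j ≤ 0) ∧
    Atil *ᵥ (1 : Fin n ⊕ Fin n → ℝ) = 0 ∧
    (∀ μ ∈ spectrum ℝ 𝒜, 0 ≤ μ) := by
  subst h𝒜 hAtil hD
  refine ⟨?_, ?_, ?_, ?_⟩
  · simp only [fromBlocks_multiply, Matrix.mul_assoc, diagonal_mul_diagonal, Matrix.neg_mul,
      Matrix.mul_neg, Matrix.one_mul, Matrix.mul_one, Matrix.mul_zero, Matrix.zero_mul,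
      add_zero, zero_add, Matrix.neg_mul, neg_neg, neg_zero]
    rfl
  · rintro (i | i) (j | j) hne
    · have hij : i ≠ j := fun h => hne (by rw [h])
      simp [one_apply, hij]
    · simp [(hSpos i j).le]
    · have : 0 ≤ ∑ k, Sᵀ i k * Matrix.diagonal (π * π) k j := by
        refine Finset.sum_nonneg fun k _ => mul_nonneg ?_ ?_
        · exact (hSpos k i).le
        · by_cases h : k = j
          · simp [Matrix.diagonal_apply, h, mul_self_nonneg]
          · simp [Matrix.diagonal_apply, h]
      simpa [mul_apply] using this
    · have hij : i ≠ j := fun h => hne (by rw [h])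
      simp [diagonal_apply, hij]
  · have hcl : ((1 : Fin n ⊕ Fin n → ℝ) ∘ Sum.inl) = (1 : Fin n → ℝ) := rfl
    have hcr : ((1 : Fin n ⊕ Fin n → ℝ) ∘ Sum.inr) = (1 : Fin n → ℝ) := rfl
    have hd1 : Matrix.diagonal (π * π) *ᵥ (1 : Fin n → ℝ) = π * π := by
      funext i; simp [mulVec, dotProduct, diagonal_apply]
    have hdd : Matrix.diagonal (Sᵀ *ᵥ (π * π)) *ᵥ (1 : Fin n → ℝ) = Sᵀ *ᵥ (π * π) := by
      funext i; simp [mulVec, dotProduct, diagonal_apply]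
    rw [fromBlocks_mulVec, hcl, hcr]
    rw [Matrix.neg_mulVec, Matrix.neg_mulVec, ← Matrix.mulVec_mulVec, hd1, hdd, hS1, Matrix.one_mulVec]
    funext x; cases x <;> simp
  · intro μ hμ
    rw [spectrum.mem_iff] at hμ
    set A := Matrix.fromBlocks (1 : Matrix (Fin n) (Fin n) ℝ) (Matrix.diagonal π * S)
      (Sᵀ * Matrix.diagonal π) (Matrix.diagonal (Sᵀ *ᵥ (π * π))) with hA
    have hdet : (algebraMap ℝ (Matrix (Fin n ⊕ Fin n) (Fin n ⊕ Fin n) ℝ) μ - A).det = 0 := by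
      by_contra h
      exact hμ ((Matrix.isUnit_iff_isUnit_det _).2 (isUnit_iff_ne_zero.2 h))
    obtain ⟨v, hv0, hveq⟩ := (Matrix.exists_mulVec_eq_zero_iff).2 hdet
    have hAv : A *ᵥ v = μ • v := by
      have := hveq
      rw [Matrix.sub_mulVec, sub_eq_zero] at this
      rw [← this, Algebra.algebraMap_eq_smul_one, Matrix.smul_mulVec,
        Matrix.one_mulVec]
    have hq : 0 ≤ v ⬝ᵥ A *ᵥ v := by
      rw [quadform_key n π S hS1 v]
      refine Finset.sum_nonneg fun i _ => Finset.sum_nonneg fun j _ => ?_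
      exact mul_nonneg (hSpos i j).le (sq_nonneg _)
    have hvv : 0 < v ⬝ᵥ v := by
      have hnn : 0 ≤ v ⬝ᵥ v := Finset.sum_nonneg fun i _ => mul_self_nonneg _
      exact lt_of_le_of_ne hnn fun h => hv0 (dotProduct_self_eq_zero.mp h.symm)
    rw [hAv, dotProduct_smul, smul_eq_mul] at hq
    nlinarith [hq, hvv]
end

section
/- With S ∈ 𝕊_n^π and 𝒜 = [[I, D_π S],[S^T D_π, diag(S^T D_π π)]], every eigenvalue λ of 𝒜 satisfies λ ≤ max{1 + ‖π‖_∞, 2‖π‖_∞}. -/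
open Matrix

/-- Eigenvalues of a matrix with nonnegative entries are bounded by any bound on row sums. -/
lemma eigenvalue_le_rowsum {m : Type*} [Fintype m] [DecidableEq m]
    (M : Matrix m m ℝ) (hM : ∀ i j, 0 ≤ M i j) (C : ℝ) (hC : 0 ≤ C)
    (hrow : ∀ i, ∑ j, M i j ≤ C) : ∀ μ ∈ spectrum ℝ M, μ ≤ C := by
  intro μ hμ
  rcases le_or_gt μ 0 with h | hμpos
  · exact h.trans hC
  rw [spectrum.mem_iff] at hμ
  have hdet : (algebraMap ℝ (Matrix m m ℝ) μ - M).det = 0 := by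
    by_contra hne
    exact hμ ((Matrix.isUnit_iff_isUnit_det _).mpr (isUnit_iff_ne_zero.mpr hne))
  obtain ⟨v, hv0, hv⟩ := (Matrix.exists_mulVec_eq_zero_iff).mpr hdet
  have hMv : M *ᵥ v = μ • v := by
    have := congrArg (fun w => M *ᵥ v + w) hv
    simpa [Matrix.sub_mulVec, Algebra.algebraMap_eq_smul_one, Matrix.smul_mulVec,
      Matrix.one_mulVec] using this.symm
  cases isEmpty_or_nonempty m with
  | inl h => exact absurd (Subsingleton.elim v 0) hv0
  | inr h => ?_
  obtain ⟨k, hk⟩ := Finite.exists_max (fun i => |v i|)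
  have hvk : 0 < |v k| := by
    rcases Function.ne_iff.mp hv0 with ⟨i, hi⟩
    exact lt_of_lt_of_le (abs_pos.mpr hi) (hk i)
  have key : μ * |v k| ≤ C * |v k| := by
    have h1 : μ * |v k| = |(M *ᵥ v) k| := by
      rw [hMv]
      simp [abs_mul, abs_of_pos hμpos]
    rw [h1]
    have h2 : |(M *ᵥ v) k| ≤ ∑ j, M k j * |v j| := by
      refine (Finset.abs_sum_le_sum_abs _ _).trans ?_
      refine Finset.sum_le_sum fun j _ => ?_
      rw [abs_mul, abs_of_nonneg (hM k j)]
    refine h2.trans ?_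
    calc ∑ j, M k j * |v j| ≤ ∑ j, M k j * |v k| :=
          Finset.sum_le_sum fun j _ => mul_le_mul_of_nonneg_left (hk j) (hM k j)
      _ = (∑ j, M k j) * |v k| := by rw [Finset.sum_mul]
      _ ≤ C * |v k| := mul_le_mul_of_nonneg_right (hrow k) (abs_nonneg _)
  exact le_of_mul_le_mul_right key hvk

/-- Every eigenvalue of `𝒜 = [[I, D_π S],[Sᵀ D_π, diag(Sᵀ D_π π)]]` is at most
`max (1 + ‖π‖_∞) (2‖π‖_∞)`. -/
theorem eigenvalue_upper_bound (n : ℕ) (π : Fin n → ℝ)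
    (hπ : ∀ i, 0 < π i) (hπ1 : π ⬝ᵥ (1 : Fin n → ℝ) = 1)
    (S : Matrix (Fin n) (Fin n) ℝ)
    (hS1 : S *ᵥ (1 : Fin n → ℝ) = 1) (hπS : π ᵥ* S = π) (hSpos : ∀ i j, 0 < S i j)
    (𝒜 : Matrix (Fin n ⊕ Fin n) (Fin n ⊕ Fin n) ℝ)
    (h𝒜 : 𝒜 = Matrix.fromBlocks 1 (Matrix.diagonal π * S) (Sᵀ * Matrix.diagonal π)
        (Matrix.diagonal (Sᵀ *ᵥ (π * π)))) :
    ∀ μ ∈ spectrum ℝ 𝒜, μ ≤ max (1 + ‖π‖) (2 * ‖π‖) := by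
  have hπnorm : ∀ i, π i ≤ ‖π‖ := by
    intro i
    calc π i ≤ |π i| := le_abs_self _
      _ = ‖π i‖ := rfl
      _ ≤ ‖π‖ := norm_le_pi_norm π i
  have hπ1' : ∀ i, π i ≤ 1 := by
    intro i
    have hsum : ∑ j, π j = 1 := by simpa [dotProduct] using hπ1
    calc π i ≤ ∑ j, π j := Finset.single_le_sum (fun j _ => (hπ j).le) (Finset.mem_univ i)
      _ = 1 := hsum
  have hrowS : ∀ i, ∑ j, S i j = 1 := by
    intro i
    have := congrFun hS1 i
    simpa [Matrix.mulVec, dotProduct] using this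
  have hcolS : ∀ j, ∑ i, π i * S i j = π j := by
    intro j
    have := congrFun hπS j
    simpa [Matrix.vecMul, dotProduct] using this
  apply eigenvalue_le_rowsum 𝒜
  · intro i j
    rcases i with i | i <;> rcases j with j | j
    · simp only [h𝒜, Matrix.fromBlocks_apply₁₁, Matrix.one_apply]
      split <;> norm_num
    · simp only [h𝒜, Matrix.fromBlocks_apply₁₂, Matrix.diagonal_mul]
      exact mul_nonneg (hπ i).le (hSpos i j).le
    · simp only [h𝒜, Matrix.fromBlocks_apply₂₁, Matrix.mul_diagonal, Matrix.transpose_apply]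
      exact mul_nonneg (hSpos j i).le (hπ j).le
    · simp only [h𝒜, Matrix.fromBlocks_apply₂₂, Matrix.diagonal_apply]
      split
      · simp only [Matrix.mulVec, dotProduct, Matrix.transpose_apply, Pi.mul_apply]
        exact Finset.sum_nonneg fun k _ => mul_nonneg (hSpos k i).le
          (mul_nonneg (hπ k).le (hπ k).le)
      · exact le_refl 0
  · exact le_trans (by positivity) (le_max_left _ _)
  · intro i
    rcases i with i | i
    · -- first block row: 1 + π i
      have h1 : ∑ j, 𝒜 (Sum.inl i) (Sum.inl j) = 1 := by
        simp [h𝒜, Matrix.one_apply]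
      have h2 : ∑ j, 𝒜 (Sum.inl i) (Sum.inr j) = π i := by
        simp only [h𝒜, Matrix.fromBlocks_apply₁₂, Matrix.diagonal_mul]
        rw [← Finset.mul_sum, hrowS i, mul_one]
      rw [Fintype.sum_sum_type, h1, h2]
      exact le_max_of_le_left (by gcongr; exact hπnorm i)
    · -- second block row: π i + (Sᵀ (π²)) i ≤ 2 π i
      have h1 : ∑ j, 𝒜 (Sum.inr i) (Sum.inl j) = π i := by
        simp only [h𝒜, Matrix.fromBlocks_apply₂₁, Matrix.mul_diagonal, Matrix.transpose_apply]
        rw [← hcolS i]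
        exact Finset.sum_congr rfl fun k _ => mul_comm _ _
      have h2 : ∑ j, 𝒜 (Sum.inr i) (Sum.inr j) ≤ π i := by
        have : ∑ j, 𝒜 (Sum.inr i) (Sum.inr j) = ∑ k, S k i * (π k * π k) := by
          simp [h𝒜, Matrix.diagonal, Matrix.mulVec, dotProduct, Pi.mul_apply]
        rw [this, ← hcolS i]
        refine Finset.sum_le_sum fun k _ => ?_
        calc S k i * (π k * π k) ≤ S k i * (1 * π k) := by
              gcongr
              · exact (hSpos k i).le
              · exact (hπ k).le
              · exact hπ1' k
          _ = π k * S k i := by ring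
      rw [Fintype.sum_sum_type, h1]
      refine le_max_of_le_right ?_
      have := hπnorm i
      linarith [h2]
end

section
/- Let A ∈ ℝ^{n×n} have strictly positive entries and let π ∈ ℝ^n be positive with π^T𝟏 = 1. Then there exist diagonal matrices D₁ and D₂ with positive diagonals such that D₁ A D₂ 𝟏 = 𝟏 and π^T D₁ A D₂ = π^T; that is, every positive matrix can be diagonally scaled to an element of 𝕊_n^π. -/
/-!
Write the scaled matrix as `B i j * exp (u i + v j)` and minimise the convex potential
`Φ w = ∑ i j, (B i j * exp (w i j) - P i j * w i j)` over the subspace `w i j = u i + v j`.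
Each term is at least `P i j * |w i j|` minus a constant, so `Φ` is coercive and attains its
minimum on this closed subspace; the first-order conditions in the directions `u = eᵢ` and
`v = eⱼ` say that the scaled matrix has the row and column sums of `P`. For the theorem take
`B = diag π * A` and `P = π πᵀ`: diagonal matrices commute, so the scaled matrix is
`diag π * (D₁ * A * D₂)`, and its marginals `π` give `D₁ A D₂ 𝟏 = 𝟏` and `πᵀ D₁ A D₂ = πᵀ`.
-/

open Matrix Filter

section Potential

variable {σ : Type*} [Fintype σ]

noncomputable def expPotential (b a w : σ → ℝ) : ℝ := ∑ s, (b s * Real.exp (w s) - a s * w s)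

lemma mul_abs_sub_le_mul_exp_sub {a b : ℝ} (hb : 0 < b) (x : ℝ) :
    a * |x| - 2 * a ^ 2 / b ≤ b * Real.exp x - a * x := by
  have hK : 0 ≤ 2 * a ^ 2 / b := by positivity
  rcases le_total x 0 with hx | hx
  · rw [abs_of_nonpos hx]
    nlinarith [mul_pos hb (Real.exp_pos x)]
  · rw [abs_of_nonneg hx]
    have hexp : x ^ 2 / 2 ≤ Real.exp x := by nlinarith [Real.quadratic_le_exp_of_nonneg hx]
    have hsquare : b * (x ^ 2 / 2) - 2 * a * x + 2 * a ^ 2 / b = b / 2 * (x - 2 * a / b) ^ 2 := by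
      field_simp; ring
    nlinarith [mul_le_mul_of_nonneg_left hexp hb.le, sq_nonneg (x - 2 * a / b)]

lemma continuous_expPotential (b a : σ → ℝ) : Continuous (expPotential b a) := by
  unfold expPotential; fun_prop

lemma mul_abs_sub_le_expPotential {b a : σ → ℝ} (hb : ∀ s, 0 < b s) (ha : ∀ s, 0 ≤ a s)
    (w : σ → ℝ) (s : σ) :
    a s * |w s| - ∑ t, 2 * a t ^ 2 / b t ≤ expPotential b a w := by
  have hterm t := mul_abs_sub_le_mul_exp_sub (a := a t) (hb t) (w t)
  calc a s * |w s| - ∑ t, 2 * a t ^ 2 / b t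
      ≤ ∑ t, (a t * |w t| - 2 * a t ^ 2 / b t) := by
        rw [Finset.sum_sub_distrib]
        gcongr
        exact Finset.single_le_sum (fun t _ => mul_nonneg (ha t) (abs_nonneg (w t)))
          (Finset.mem_univ s)
    _ ≤ expPotential b a w := Finset.sum_le_sum fun t _ => hterm t

lemma tendsto_expPotential_cocompact {b a : σ → ℝ} (hb : ∀ s, 0 < b s) (ha : ∀ s, 0 < a s) :
    Tendsto (expPotential b a) (cocompact (σ → ℝ)) atTop := by
  set K := ∑ t, 2 * a t ^ 2 / b t
  refine (hasBasis_cocompact.tendsto_iff atTop_basis).2 fun C _ => ?_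
  refine ⟨Set.univ.pi fun s => Set.Icc (-((C + K) / a s)) ((C + K) / a s),
    isCompact_univ_pi fun s => isCompact_Icc, fun w hw => ?_⟩
  obtain ⟨s, hs⟩ := not_forall.1 (mt Set.mem_univ_pi.2 hw)
  have hlt : (C + K) / a s < |w s| := not_le.1 (mt abs_le.1 hs)
  have hbound := mul_abs_sub_le_expPotential hb (fun t => (ha t).le) w s
  rw [div_lt_iff₀' (ha s)] at hlt
  exact Set.mem_Ici.2 (by linarith)

lemma hasDerivAt_expPotential_add_smul (b a w h : σ → ℝ) :
    HasDerivAt (fun t : ℝ => expPotential b a (w + t • h))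
      (∑ s, (b s * Real.exp (w s) - a s) * h s) 0 := by
  unfold expPotential
  refine HasDerivAt.fun_sum fun s _ => ?_
  have hline : HasDerivAt (fun t : ℝ => w s + t * h s) (h s) 0 := by
    simpa using ((hasDerivAt_id (0 : ℝ)).mul_const (h s)).const_add (w s)
  convert (hline.exp.const_mul (b s)).sub (hline.const_mul (a s)) using 1
  · ext t; simp
  · simp; ring

end Potential

theorem Continuous.exists_forall_le_comp_linearMap {E F : Type*} [NormedAddCommGroup E]
    [NormedSpace ℝ E] [FiniteDimensional ℝ E] [AddCommGroup F] [Module ℝ F] {f : E → ℝ}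
    (hf : Continuous f) (hlim : Tendsto f (cocompact E) atTop) (L : F →ₗ[ℝ] E) :
    ∃ x, ∀ y, f (L x) ≤ f (L y) := by
  have hclosed : IsClosed (LinearMap.range L : Set E) :=
    (LinearMap.range L).closed_of_finiteDimensional
  obtain ⟨⟨_, x, rfl⟩, hx⟩ := (hf.comp continuous_subtype_val).exists_forall_le
    (hlim.comp hclosed.isClosedEmbedding_subtypeVal.tendsto_cocompact)
  exact ⟨x, fun y => hx ⟨L y, y, rfl⟩⟩

theorem sum_mul_eq_zero_of_forall_expPotential_comp_le {σ F : Type*} [Fintype σ]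
    [AddCommGroup F] [Module ℝ F] {b a : σ → ℝ} (L : F →ₗ[ℝ] σ → ℝ) {x : F}
    (hx : ∀ y, expPotential b a (L x) ≤ expPotential b a (L y)) (d : F) :
    ∑ s, (b s * Real.exp (L x s) - a s) * L d s = 0 := by
  refine IsLocalMin.hasDerivAt_eq_zero (Eventually.of_forall fun t => ?_)
    (hasDerivAt_expPotential_add_smul b a (L x) (L d))
  simpa using hx (x + t • d)

def outerSum (ι κ : Type*) : (ι → ℝ) × (κ → ℝ) →ₗ[ℝ] ι × κ → ℝ where
  toFun x p := x.1 p.1 + x.2 p.2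
  map_add' x y := by ext; simp only [Prod.fst_add, Prod.snd_add, Pi.add_apply]; ring
  map_smul' c x := by ext; simp only [Prod.smul_fst, Prod.smul_snd, Pi.smul_apply, smul_eq_mul,
    RingHom.id_apply]; ring

lemma outerSum_apply {ι κ : Type*} (x : (ι → ℝ) × (κ → ℝ)) (p : ι × κ) :
    outerSum ι κ x p = x.1 p.1 + x.2 p.2 := rfl

lemma sum_mul_outerSum_single_fst {ι κ : Type*} [Fintype ι] [Fintype κ] [DecidableEq ι]
    (g : ι × κ → ℝ) (i : ι) :
    ∑ p, g p * outerSum ι κ (Pi.single i 1, 0) p = ∑ j, g (i, j) := by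
  rw [Fintype.sum_prod_type, Fintype.sum_eq_single i fun i' hi' => by simp [outerSum_apply, hi']]
  simp [outerSum_apply]

lemma sum_mul_outerSum_single_snd {ι κ : Type*} [Fintype ι] [Fintype κ] [DecidableEq κ]
    (g : ι × κ → ℝ) (j : κ) :
    ∑ p, g p * outerSum ι κ (0, Pi.single j 1) p = ∑ i, g (i, j) := by
  simp [outerSum_apply, Fintype.sum_prod_type, Pi.single_apply]

theorem exists_diagonal_scaling_eq_marginals {ι κ : Type*} [Fintype ι] [Fintype κ]
    [DecidableEq ι] [DecidableEq κ] {B P : Matrix ι κ ℝ}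
    (hB : ∀ i j, 0 < B i j) (hP : ∀ i j, 0 < P i j) :
    ∃ d₁ : ι → ℝ, ∃ d₂ : κ → ℝ, (∀ i, 0 < d₁ i) ∧ (∀ j, 0 < d₂ j) ∧
      (diagonal d₁ * B * diagonal d₂) *ᵥ 1 = P *ᵥ 1 ∧
      1 ᵥ* (diagonal d₁ * B * diagonal d₂) = 1 ᵥ* P := by
  obtain ⟨⟨u, v⟩, hmin⟩ := Continuous.exists_forall_le_comp_linearMap
    (continuous_expPotential (fun p : ι × κ => B p.1 p.2) (fun p => P p.1 p.2))
    (tendsto_expPotential_cocompact (fun p => hB p.1 p.2) (fun p => hP p.1 p.2)) (outerSum ι κ)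
  have hstat := sum_mul_eq_zero_of_forall_expPotential_comp_le (outerSum ι κ) hmin
  have hentry i j : (diagonal (Real.exp ∘ u) * B * diagonal (Real.exp ∘ v)) i j
      = B i j * Real.exp (u i + v j) := by
    rw [mul_diagonal, diagonal_mul, Function.comp_apply, Function.comp_apply, Real.exp_add]; ring
  refine ⟨Real.exp ∘ u, Real.exp ∘ v, fun i => Real.exp_pos _, fun j => Real.exp_pos _, ?_, ?_⟩
  · ext i
    have hrow := hstat (Pi.single i 1, 0)
    rw [sum_mul_outerSum_single_fst, Finset.sum_sub_distrib, sub_eq_zero] at hrow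
    simpa [mulVec, dotProduct, hentry, outerSum_apply] using hrow
  · ext j
    have hcol := hstat (0, Pi.single j 1)
    rw [sum_mul_outerSum_single_snd, Finset.sum_sub_distrib, sub_eq_zero] at hcol
    simpa [vecMul, dotProduct, hentry, outerSum_apply] using hcol

/-- Every positive matrix can be diagonally scaled (with positive diagonal scalings)
to a positive stochastic matrix with stationary distribution `π`. -/
theorem sinkhorn_scaling_to_fixed_stationary (n : ℕ) (π : Fin n → ℝ)
    (hπ : ∀ i, 0 < π i) (hπ1 : π ⬝ᵥ (1 : Fin n → ℝ) = 1)
    (A : Matrix (Fin n) (Fin n) ℝ) (hA : ∀ i j, 0 < A i j) :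
    ∃ d₁ d₂ : Fin n → ℝ, (∀ i, 0 < d₁ i) ∧ (∀ i, 0 < d₂ i) ∧
      (Matrix.diagonal d₁ * A * Matrix.diagonal d₂) *ᵥ (1 : Fin n → ℝ) = 1 ∧
      π ᵥ* (Matrix.diagonal d₁ * A * Matrix.diagonal d₂) = π := by
  obtain ⟨d₁, d₂, hd₁, hd₂, hrow, hcol⟩ :=
    exists_diagonal_scaling_eq_marginals (B := diagonal π * A) (P := vecMulVec π π)
      (fun i j => by rw [diagonal_mul]; exact mul_pos (hπ i) (hA i j))
      (fun i j => mul_pos (hπ i) (hπ j))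
  set N := diagonal d₁ * A * diagonal d₂
  have hcomm : diagonal d₁ * (diagonal π * A) * diagonal d₂ = diagonal π * N := by
    simp only [N, ← Matrix.mul_assoc, diagonal_mul_diagonal, mul_comm]
  have hπvec : (1 : Fin n → ℝ) ᵥ* diagonal π = π := funext fun i => by
    rw [vecMul_diagonal, Pi.one_apply, one_mul]
  rw [hcomm, ← mulVec_mulVec, vecMulVec_mulVec, hπ1, MulOpposite.op_one, one_smul] at hrow
  rw [hcomm, ← vecMul_vecMul, hπvec, vecMul_vecMulVec, dotProduct_comm, hπ1, one_smul] at hcol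
  refine ⟨d₁, d₂, hd₁, hd₂, funext fun i => ?_, hcol⟩
  have hrowi := congrFun hrow i
  rw [mulVec_diagonal] at hrowi
  exact mul_left_cancel₀ (hπ i).ne' (hrowi.trans (mul_one _).symm)
end

section
/- For 0 < a ≤ 1/3, the 3×3 circulant stochastic matrix X with first row (1/3)(1, 1+√(3a), 1−√(3a)) (rows cyclically shifted) satisfies X² = A(a), where A(a) is the symmetric circulant matrix with diagonal entries (1−2a)/3 and off-diagonal entries (1+a)/3. Moreover X is doubly stochastic. -/
open Matrix

/-- For `0 < a ≤ 1/3`, the circulant matrix `X` with first row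
`(1/3)(1, 1+√(3a), 1−√(3a))` satisfies `X² = A(a)` and is doubly stochastic. -/
theorem circulant_square_root (a : ℝ) (ha : 0 < a) (ha' : a ≤ 1 / 3)
    (A X : Matrix (Fin 3) (Fin 3) ℝ)
    (hA : A = (1 / 3 : ℝ) • !![1 - 2*a, 1 + a, 1 + a;
                              1 + a, 1 - 2*a, 1 + a;
                              1 + a, 1 + a, 1 - 2*a])
    (hX : X = (1 / 3 : ℝ) • !![1, 1 + Real.sqrt (3*a), 1 - Real.sqrt (3*a);
                               1 - Real.sqrt (3*a), 1, 1 + Real.sqrt (3*a);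
                               1 + Real.sqrt (3*a), 1 - Real.sqrt (3*a), 1]) :
    X * X = A ∧ (∀ i j, 0 ≤ X i j) ∧
      X *ᵥ (1 : Fin 3 → ℝ) = 1 ∧ (1 : Fin 3 → ℝ) ᵥ* X = 1 := by
  have hs : Real.sqrt (3*a) ^ 2 = 3*a := Real.sq_sqrt (by linarith)
  have hs0 : 0 ≤ Real.sqrt (3*a) := Real.sqrt_nonneg _
  have hs1 : Real.sqrt (3*a) ≤ 1 := by
    rw [show (1:ℝ) = Real.sqrt 1 by simp]
    exact Real.sqrt_le_sqrt (by linarith)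
  subst hA hX
  generalize hgen : Real.sqrt (3*a) = s at hs hs0 hs1 ⊢
  refine ⟨?_, ?_, ?_, ?_⟩
  · ext i j
    fin_cases i <;> fin_cases j <;>
      simp [Matrix.mul_apply, Fin.sum_univ_succ, Matrix.vecHead, Matrix.vecTail] <;> nlinarith [hs]
  · intro i j
    fin_cases i <;> fin_cases j <;> simp <;> nlinarith
  · funext i
    fin_cases i <;>
      simp [Matrix.mulVec, dotProduct, Fin.sum_univ_succ] <;> ring
  · funext j
    fin_cases j <;>
      simp [Matrix.vecMul, dotProduct, Fin.sum_univ_succ] <;> ring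
end

section
/- Let S ∈ 𝕊_n^π and let T = diag(S^T D_π π) − S^T D_{π²} S be the Schur complement of the (1,1)-block of 𝒜. Then T is a symmetric matrix with nonpositive off-diagonal entries and zero row sums, hence positive semidefinite. -/
open Matrix Finset

/-!
Write `w = π ⊙ π ≥ 0`. The off-diagonal entries of `T` are `-∑ₖ S k i * w k * S k j ≤ 0`, and
`S 𝟏 = 𝟏` gives `T 𝟏 = Sᵀ w - Sᵀ D_w S 𝟏 = 0`. For a symmetric matrix `A` with zero row sums,
`xᵀ A x = -½ ∑ᵢⱼ A i j (x i - x j)²`, which is nonnegative once the off-diagonal entries are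
nonpositive.
-/

namespace Matrix

variable {n : Type*} [Fintype n]

lemma diagonal_mulVec_one {α : Type*} [NonAssocSemiring α] [DecidableEq n] (v : n → α) :
    diagonal v *ᵥ 1 = v := by
  ext k
  simp [mulVec_diagonal]

lemma dotProduct_mulVec_eq_neg_sum_sq_div_two {A : Matrix n n ℝ} (hA : A.IsSymm)
    (h1 : A *ᵥ 1 = 0) (x : n → ℝ) :
    x ⬝ᵥ (A *ᵥ x) = -(∑ i, ∑ j, A i j * (x i - x j) ^ 2) / 2 := by
  have hrow : ∀ i, ∑ j, A i j = 0 := fun i => by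
    simpa [mulVec, dotProduct] using congrFun h1 i
  have hcol : ∀ j, ∑ i, A i j = 0 := fun j => by
    simpa only [hA.apply] using hrow j
  have hleft : ∑ i, ∑ j, A i j * x i ^ 2 = 0 := by
    simp [← Finset.sum_mul, hrow]
  have hright : ∑ i, ∑ j, A i j * x j ^ 2 = 0 := by
    rw [Finset.sum_comm]; simp [← Finset.sum_mul, hcol]
  have hcross : x ⬝ᵥ (A *ᵥ x) = ∑ i, ∑ j, A i j * (x i * x j) := by
    simp only [dotProduct, mulVec, Finset.mul_sum]
    exact sum_congr rfl fun i _ => sum_congr rfl fun j _ => by ring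
  have hexpand : ∑ i, ∑ j, A i j * (x i - x j) ^ 2 =
      ∑ i, ∑ j, A i j * x i ^ 2 - 2 * ∑ i, ∑ j, A i j * (x i * x j)
        + ∑ i, ∑ j, A i j * x j ^ 2 := by
    simp only [Finset.mul_sum, ← sum_sub_distrib, ← sum_add_distrib]
    exact sum_congr rfl fun i _ => sum_congr rfl fun j _ => by ring
  rw [hexpand, hleft, hright, hcross]
  ring

lemma PosSemidef.of_isSymm_of_offDiag_nonpos_of_mulVec_one {A : Matrix n n ℝ}
    (hA : A.IsSymm) (hoff : ∀ i j, i ≠ j → A i j ≤ 0) (h1 : A *ᵥ 1 = 0) : A.PosSemidef := by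
  refine .of_dotProduct_mulVec_nonneg (by rwa [IsHermitian, conjTranspose_eq_transpose_of_trivial])
    fun x => ?_
  rw [star_trivial, dotProduct_mulVec_eq_neg_sum_sq_div_two hA h1, neg_div, neg_nonneg]
  refine div_nonpos_of_nonpos_of_nonneg (sum_nonpos fun i _ => sum_nonpos fun j _ => ?_) zero_le_two
  rcases eq_or_ne i j with rfl | hij
  · simp
  · exact mul_nonpos_of_nonpos_of_nonneg (hoff i j hij) (sq_nonneg _)

end Matrix

section Schur

variable {m n : Type*} [Fintype m] [DecidableEq m] [DecidableEq n]

def schurMatrix (S : Matrix m n ℝ) (w : m → ℝ) : Matrix n n ℝ :=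
  diagonal (Sᵀ *ᵥ w) - Sᵀ * diagonal w * S

lemma schurMatrix_isSymm (S : Matrix m n ℝ) (w : m → ℝ) : (schurMatrix S w).IsSymm :=
  (isSymm_diagonal _).sub <| by
    simp [IsSymm, Matrix.transpose_mul, Matrix.mul_assoc]

lemma schurMatrix_apply_of_ne (S : Matrix m n ℝ) (w : m → ℝ) {i j : n} (hij : i ≠ j) :
    schurMatrix S w i j = -∑ k, S k i * w k * S k j := by
  rw [schurMatrix, Matrix.sub_apply, diagonal_apply_ne _ hij, zero_sub, mul_apply]
  simp only [mul_diagonal, transpose_apply]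

lemma schurMatrix_apply_nonpos {S : Matrix m n ℝ} {w : m → ℝ} (hS : ∀ k i, 0 ≤ S k i)
    (hw : ∀ k, 0 ≤ w k) {i j : n} (hij : i ≠ j) : schurMatrix S w i j ≤ 0 := by
  rw [schurMatrix_apply_of_ne S w hij, neg_nonpos]
  exact sum_nonneg fun k _ => mul_nonneg (mul_nonneg (hS k i) (hw k)) (hS k j)

lemma schurMatrix_mulVec_one [Fintype n] {S : Matrix m n ℝ} (hS1 : S *ᵥ 1 = 1) (w : m → ℝ) :
    schurMatrix S w *ᵥ 1 = 0 := by
  rw [schurMatrix, sub_mulVec, ← mulVec_mulVec, hS1, ← mulVec_mulVec, diagonal_mulVec_one,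
    diagonal_mulVec_one, sub_self]

end Schur

theorem schur_complement_psd_general (n : ℕ) (π : Fin n → ℝ)
    (S : Matrix (Fin n) (Fin n) ℝ)
    (hS1 : S *ᵥ (1 : Fin n → ℝ) = 1) (hSpos : ∀ i j, 0 < S i j)
    (T : Matrix (Fin n) (Fin n) ℝ)
    (hT : T = Matrix.diagonal (Sᵀ *ᵥ (π * π)) - Sᵀ * Matrix.diagonal (π * π) * S) :
    Tᵀ = T ∧ (∀ i j, i ≠ j → T i j ≤ 0) ∧ T *ᵥ (1 : Fin n → ℝ) = 0 ∧ T.PosSemidef := by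
  change T = schurMatrix S (π * π) at hT
  subst hT
  have hsymm := schurMatrix_isSymm S (π * π)
  have hoff : ∀ i j, i ≠ j → schurMatrix S (π * π) i j ≤ 0 := fun i j hij =>
    schurMatrix_apply_nonpos (fun k i => (hSpos k i).le) (fun k => mul_self_nonneg (π k)) hij
  have hrow := schurMatrix_mulVec_one hS1 (π * π)
  exact ⟨hsymm, hoff, hrow, .of_isSymm_of_offDiag_nonpos_of_mulVec_one hsymm hoff hrow⟩

/-- The Schur complement `T = diag(Sᵀ D_π π) − Sᵀ D_{π²} S` is symmetric, with
nonpositive off-diagonal entries and zero row sums, and is positive semidefinite. -/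
theorem schur_complement_psd (n : ℕ) (π : Fin n → ℝ)
    (hπ : ∀ i, 0 < π i) (hπ1 : π ⬝ᵥ (1 : Fin n → ℝ) = 1)
    (S : Matrix (Fin n) (Fin n) ℝ)
    (hS1 : S *ᵥ (1 : Fin n → ℝ) = 1) (hπS : π ᵥ* S = π) (hSpos : ∀ i j, 0 < S i j)
    (T : Matrix (Fin n) (Fin n) ℝ)
    (hT : T = Matrix.diagonal (Sᵀ *ᵥ (π * π)) - Sᵀ * Matrix.diagonal (π * π) * S) :
    Tᵀ = T ∧ (∀ i j, i ≠ j → T i j ≤ 0) ∧ T *ᵥ (1 : Fin n → ℝ) = 0 ∧ T.PosSemidef :=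
  schur_complement_psd_general n π S hS1 hSpos T hT
end

section
/- Let S ∈ 𝕊_n^π and define the scaled Schur complement S̃ = diag(S^T D_π π)^{−1/2} · S^T D_{π²} S · diag(S^T D_π π)^{−1/2}. Then S̃ is symmetric positive semidefinite with spectral radius ρ(S̃) = 1, attained at the eigenvector diag(S^T D_π π)^{1/2}𝟏. -/
open Matrix

/-- The scaled Schur complement
`S̃ = diag(Sᵀ D_π π)^{-1/2} · Sᵀ D_{π²} S · diag(Sᵀ D_π π)^{-1/2}` is symmetric
positive semidefinite with spectral radius 1, attained at the eigenvector
`u = diag(Sᵀ D_π π)^{1/2} 𝟏`. -/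
theorem scaled_schur_complement_spectral_radius (n : ℕ) (π : Fin n → ℝ)
    (hπ : ∀ i, 0 < π i) (hπ1 : π ⬝ᵥ (1 : Fin n → ℝ) = 1)
    (S : Matrix (Fin n) (Fin n) ℝ)
    (hS1 : S *ᵥ (1 : Fin n → ℝ) = 1) (hπS : π ᵥ* S = π) (hSpos : ∀ i j, 0 < S i j)
    (Stil : Matrix (Fin n) (Fin n) ℝ)
    (hStil : Stil =
      Matrix.diagonal (fun i => 1 / Real.sqrt ((Sᵀ *ᵥ (π * π)) i)) *
      (Sᵀ * Matrix.diagonal (π * π) * S) *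
      Matrix.diagonal (fun i => 1 / Real.sqrt ((Sᵀ *ᵥ (π * π)) i)))
    (u : Fin n → ℝ) (hu : u = fun i => Real.sqrt ((Sᵀ *ᵥ (π * π)) i)) :
    Stil.PosSemidef ∧ Stil *ᵥ u = u ∧ ∀ μ ∈ spectrum ℝ Stil, μ ≤ 1 := by
  set d : Fin n → ℝ := Sᵀ *ᵥ (π * π) with hdDef
  have hdi : ∀ i, d i = ∑ k, π k * π k * S k i := by
    intro i
    simp only [hdDef, Matrix.mulVec, dotProduct, transpose_apply, Pi.mul_apply]
    exact Finset.sum_congr rfl fun k _ => by ring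
  have hdpos : ∀ i, 0 < d i := by
    intro i
    rw [hdi]
    have : Nonempty (Fin n) := ⟨i⟩
    exact Finset.sum_pos
      (fun k _ => mul_pos (mul_pos (hπ k) (hπ k)) (hSpos k i)) Finset.univ_nonempty
  have hsq : ∀ i, 0 < Real.sqrt (d i) := fun i => Real.sqrt_pos.2 (hdpos i)
  set e : Fin n → ℝ := fun i => 1 / Real.sqrt (d i) with heDef
  set A : Matrix (Fin n) (Fin n) ℝ := diagonal π * S * diagonal e with hA
  have hct : ∀ (B : Matrix (Fin n) (Fin n) ℝ), Bᴴ = Bᵀ := fun B => by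
    ext i j; simp [conjTranspose_apply]
  have hfact : Stil = Aᴴ * A := by
    rw [hStil, hA, hct, transpose_mul, transpose_mul, diagonal_transpose,
      diagonal_transpose]
    have hpp : diagonal (π * π) = diagonal π * diagonal π := by
      rw [diagonal_mul_diagonal]; rfl
    rw [hpp]
    noncomm_ring
  have hpsd : Stil.PosSemidef := hfact ▸ posSemidef_conjTranspose_mul_self A
  have hrow : ∀ k, ∑ j, S k j = 1 := by
    intro k
    have := congrFun hS1 k
    simpa [Matrix.mulVec, dotProduct] using this
  have heig : Stil *ᵥ u = u := by
    rw [hStil]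
    rw [← mulVec_mulVec, ← mulVec_mulVec, ← mulVec_mulVec, ← mulVec_mulVec]
    have h1 : diagonal e *ᵥ u = 1 := by
      ext i
      rw [mulVec_diagonal]
      simp only [hu, heDef, Pi.one_apply]
      field_simp
      exact div_self (hsq i).ne'
    rw [h1, hS1]
    have h2 : diagonal (π * π) *ᵥ 1 = π * π := by
      ext i; rw [mulVec_diagonal]; simp
    rw [h2]
    ext i
    rw [mulVec_diagonal]
    simp only [hu, heDef]
    rw [one_div, inv_mul_eq_div, Real.div_sqrt]
  have hquad : ∀ x : Fin n → ℝ, x ⬝ᵥ (Stil *ᵥ x) ≤ x ⬝ᵥ x := by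
    intro x
    have hAx : x ⬝ᵥ (Stil *ᵥ x) = (A *ᵥ x) ⬝ᵥ (A *ᵥ x) := by
      rw [hfact, hct, ← mulVec_mulVec, dotProduct_mulVec, vecMul_transpose]
    rw [hAx]
    set y : Fin n → ℝ := fun i => x i * e i with hy
    have hAxk : ∀ k, (A *ᵥ x) k = π k * ∑ i, S k i * y i := by
      intro k
      simp only [hA, ← mulVec_mulVec]
      rw [mulVec_diagonal]
      congr 1
      have hDx : diagonal e *ᵥ x = y := by
        ext i; rw [mulVec_diagonal]; simp [hy, mul_comm]
      rw [hDx]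
      simp [Matrix.mulVec, dotProduct]
    have key : ∀ k, (π k * ∑ i, S k i * y i) ^ 2 ≤ π k ^ 2 * ∑ i, S k i * y i ^ 2 := by
      intro k
      rw [mul_pow]
      refine mul_le_mul_of_nonneg_left ?_ (sq_nonneg (π k))
      calc (∑ i, S k i * y i) ^ 2
          = (∑ i, Real.sqrt (S k i) * (Real.sqrt (S k i) * y i)) ^ 2 := by
            congr 1; refine Finset.sum_congr rfl fun i _ => ?_
            conv_rhs => rw [← mul_assoc, Real.mul_self_sqrt (hSpos k i).le]
        _ ≤ (∑ i, Real.sqrt (S k i) ^ 2) * ∑ i, (Real.sqrt (S k i) * y i) ^ 2 :=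
            Finset.sum_mul_sq_le_sq_mul_sq _ _ _
        _ = (∑ i, S k i) * ∑ i, S k i * y i ^ 2 := by
            congr 1
            · exact Finset.sum_congr rfl fun i _ => Real.sq_sqrt (hSpos k i).le
            · refine Finset.sum_congr rfl fun i _ => by
                rw [mul_pow, Real.sq_sqrt (hSpos k i).le]
        _ = ∑ i, S k i * y i ^ 2 := by rw [hrow k, one_mul]
    calc (A *ᵥ x) ⬝ᵥ (A *ᵥ x) = ∑ k, (π k * ∑ i, S k i * y i) ^ 2 := by
          simp only [dotProduct, hAxk]; exact Finset.sum_congr rfl fun k _ => (sq _).symm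
      _ ≤ ∑ k, π k ^ 2 * ∑ i, S k i * y i ^ 2 := Finset.sum_le_sum fun k _ => key k
      _ = ∑ i, (∑ k, π k * π k * S k i) * y i ^ 2 := by
          simp_rw [Finset.mul_sum]
          rw [Finset.sum_comm]
          refine Finset.sum_congr rfl fun i _ => ?_
          rw [Finset.sum_mul]
          exact Finset.sum_congr rfl fun k _ => by ring
      _ = ∑ i, x i * x i := by
          refine Finset.sum_congr rfl fun i _ => ?_
          rw [← hdi i, hy]
          simp only [heDef]
          rw [mul_pow, one_div, inv_pow, Real.sq_sqrt (hdpos i).le]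
          field_simp
          rw [mul_comm (d i) (x i ^ 2), mul_div_assoc, div_self (hdpos i).ne', mul_one]
      _ = x ⬝ᵥ x := rfl
  refine ⟨hpsd, heig, ?_⟩
  intro μ hμ
  rw [spectrum.mem_iff] at hμ
  have hdet : ((algebraMap ℝ (Matrix (Fin n) (Fin n) ℝ)) μ - Stil).det = 0 := by
    by_contra h
    exact hμ ((Matrix.isUnit_iff_isUnit_det _).2 (isUnit_iff_ne_zero.2 h))
  obtain ⟨v, hv0, hv⟩ := (Matrix.exists_mulVec_eq_zero_iff).2 hdet
  have hvv : Stil *ᵥ v = μ • v := by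
    rw [sub_mulVec] at hv
    have h2 : (algebraMap ℝ (Matrix (Fin n) (Fin n) ℝ)) μ *ᵥ v = μ • v := by
      rw [Matrix.algebraMap_eq_diagonal]
      ext i
      rw [mulVec_diagonal]
      simp [Pi.algebraMap_def, Algebra.algebraMap_self_apply]
    rw [h2] at hv
    exact (sub_eq_zero.mp hv).symm
  have hposv : 0 < v ⬝ᵥ v := by
    refine lt_of_le_of_ne (Finset.sum_nonneg fun i _ => mul_self_nonneg _) ?_
    intro h
    exact hv0 (dotProduct_self_eq_zero.mp h.symm)
  have hb := hquad v
  rw [hvv, dotProduct_smul] at hb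
  have : μ * (v ⬝ᵥ v) ≤ 1 * (v ⬝ᵥ v) := by simpa using hb
  exact le_of_mul_le_mul_right this hposv
end
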